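/- arXiv:2406.02512 — 2 statements merged into one kernel-verified Lean document; each statement's English description precedes it below -/
import Mathlib

section
/- With the notation of the combinatorial tree for the cubic derivative NLS (branch sets Γ^{(k)}, counting function ℓ, denominators 𝔇, and multi-index sets ℜ^{(k,γ)}), if 0 < T ≤ 4/81, then for all k ≥ 1, M_k := ∑_{γ ∈ Γ^{(k)}} (T^{ℓ(γ)}/𝔇(γ)) ∑_{α ∈ ℜ^{(k,γ)}} ∏_j α_j! ≤ 3/2. -/
/-!
Every `α ∈ ℜ^{(γ₁,γ₂,γ₃)}` is a concatenation `x ++ y ++ z` of multi-indices of the `γⱼ` plus a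
unit vector `eⱼ` of length `2σ(γ) = 2ℓ(γ) + 1`. Adding `eⱼ` multiplies `∏ αᵢ!` by `αⱼ + 1`, and
summing over `j` gives the factor `2ℓ(γ) + 1 + |x ++ y ++ z| = 3ℓ(γ)`, so
`P(γ) = 3ℓ(γ) ∏ P(γⱼ)`. With `𝔇(γ) = ℓ(γ) ∏ 𝔇(γⱼ)` the summand `w(γ) = T^ℓ(γ)/𝔇(γ) · P(γ)` obeys
`w(γ) = 3T ∏ w(γⱼ)`, whence `M_{k+1} = 1 + 3T M_k³`. Since `M_1 = 1 + 3T` and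
`1 + 3T (3/2)³ ≤ 3/2` for `T ≤ 4/81`, induction gives `M_k ≤ 3/2`.
-/

inductive BranchTree : Type
  | zero : BranchTree
  | one : BranchTree
  | node : BranchTree → BranchTree → BranchTree → BranchTree
  deriving DecidableEq

def sigma2 : BranchTree → ℕ
  | .zero => 1
  | .one => 3
  | .node a b c => sigma2 a + sigma2 b + sigma2 c

def ellB : BranchTree → ℕ
  | .zero => 0
  | .one => 1
  | .node a b c => 1 + ellB a + ellB b + ellB c

/-- The denominators 𝔇: 𝔇(0) = 𝔇(1) = 1, 𝔇((γ₁,γ₂,γ₃)) = ℓ((γ₁,γ₂,γ₃))·∏ 𝔇(γⱼ). -/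
def Dfun : BranchTree → ℕ
  | .zero => 1
  | .one => 1
  | .node a b c => ellB (.node a b c) * (Dfun a * Dfun b * Dfun c)

def Gamma : ℕ → Finset BranchTree
  | 0 => ∅
  | 1 => {BranchTree.zero, BranchTree.one}
  | (n + 2) => insert BranchTree.zero
      (((Gamma (n + 1)) ×ˢ (Gamma (n + 1)) ×ˢ (Gamma (n + 1))).image
        fun p => BranchTree.node p.1 p.2.1 p.2.2)

def unitIdx (n : ℕ) : Multiset (List ℕ) :=
  (Multiset.range n).map fun j => (List.range n).map fun i => if i = j then 1 else 0

def Rset : BranchTree → Multiset (List ℕ)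
  | .zero => {[0]}
  | .one => {[1, 0, 0], [0, 1, 0], [0, 0, 1]}
  | .node a b c =>
      (Rset a).bind fun x => (Rset b).bind fun y => (Rset c).bind fun z =>
        (unitIdx (sigma2 (.node a b c))).map fun e =>
          List.zipWith (· + ·) (x ++ y ++ z) e

def Pfun (γ : BranchTree) : ℕ :=
  ((Rset γ).map fun α => (α.map Nat.factorial).prod).sum

lemma List.zipWith_add_replicate_zero (l : List ℕ) :
    List.zipWith (· + ·) l (List.replicate l.length 0) = l := by
  induction l with
  | nil => rfl
  | cons a t ih => simp [List.replicate_succ, ih]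

lemma List.sum_zipWith_add {l₁ l₂ : List ℕ} (h : l₁.length = l₂.length) :
    (List.zipWith (· + ·) l₁ l₂).sum = l₁.sum + l₂.sum := by
  induction l₁ generalizing l₂ with
  | nil => simp [(List.length_eq_zero_iff.mp h.symm)]
  | cons a t ih =>
    cases l₂ with
    | nil => simp at h
    | cons b s =>
      simp only [List.zipWith_cons_cons, List.sum_cons, ih (Nat.succ.inj h)]
      ring

lemma unitIdx_succ (n : ℕ) :
    unitIdx (n + 1) = (1 :: List.replicate n 0) ::ₘ (unitIdx n).map (List.cons 0) := by
  simp only [unitIdx, ← Multiset.coe_range, Multiset.map_coe, List.range_succ_eq_map]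
  simp [Function.comp_def]

lemma length_sum_of_mem_unitIdx {n : ℕ} {e : List ℕ} (he : e ∈ unitIdx n) :
    e.length = n ∧ e.sum = 1 := by
  induction n generalizing e with
  | zero => simp [unitIdx] at he
  | succ n ih =>
    rw [unitIdx_succ, Multiset.mem_cons, Multiset.mem_map] at he
    rcases he with rfl | ⟨e, he, rfl⟩
    · simp
    · simpa using ih he

def factorialProd (α : List ℕ) : ℕ := (α.map Nat.factorial).prod

lemma factorialProd_cons (a : ℕ) (α : List ℕ) :
    factorialProd (a :: α) = a.factorial * factorialProd α := by
  simp [factorialProd]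

lemma factorialProd_append (α β : List ℕ) :
    factorialProd (α ++ β) = factorialProd α * factorialProd β := by
  simp [factorialProd]

lemma sum_factorialProd_add_unitIdx (α : List ℕ) :
    ((unitIdx α.length).map fun e => factorialProd (List.zipWith (· + ·) α e)).sum
      = (α.length + α.sum) * factorialProd α := by
  induction α with
  | nil => rfl
  | cons a t ih =>
    simp only [List.length_cons, unitIdx_succ, Multiset.map_cons, Multiset.map_map,
      Function.comp_def, Multiset.sum_cons, List.zipWith_cons_cons, factorialProd_cons,
      List.zipWith_add_replicate_zero, add_zero, Multiset.sum_map_mul_left, ih, List.sum_cons,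
      Nat.factorial_succ]
    ring

lemma length_sum_of_mem_Rset {γ : BranchTree} {α : List ℕ} (hα : α ∈ Rset γ) :
    α.length = sigma2 γ ∧ α.sum = ellB γ := by
  induction γ generalizing α with
  | zero => simp_all [Rset, sigma2, ellB]
  | one =>
    simp only [Rset, Multiset.insert_eq_cons, Multiset.mem_cons, Multiset.mem_singleton] at hα
    rcases hα with rfl | rfl | rfl <;> exact ⟨rfl, rfl⟩
  | node a b c iha ihb ihc =>
    simp only [Rset, Multiset.mem_bind, Multiset.mem_map] at hα
    obtain ⟨x, hx, y, hy, z, hz, e, he, rfl⟩ := hα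
    obtain ⟨hxl, hxs⟩ := iha hx
    obtain ⟨hyl, hys⟩ := ihb hy
    obtain ⟨hzl, hzs⟩ := ihc hz
    obtain ⟨hel, hes⟩ := length_sum_of_mem_unitIdx he
    have hlen : (x ++ y ++ z).length = e.length := by simp [hxl, hyl, hzl, hel, sigma2, add_assoc]
    rw [List.length_zipWith, List.sum_zipWith_add hlen, hlen, hel, min_self]
    simp [hxs, hys, hzs, hes, ellB]
    omega

lemma sigma2_eq (γ : BranchTree) : sigma2 γ = 2 * ellB γ + 1 := by
  induction γ with
  | zero => rfl
  | one => rfl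
  | node a b c iha ihb ihc => simp only [sigma2, ellB, iha, ihb, ihc]; ring

lemma Pfun_eq_sum_factorialProd (γ : BranchTree) :
    Pfun γ = ((Rset γ).map factorialProd).sum := rfl

lemma Pfun_node (a b c : BranchTree) :
    Pfun (.node a b c) = 3 * ellB (.node a b c) * (Pfun a * Pfun b * Pfun c) := by
  have hinner : ∀ x ∈ Rset a, ∀ y ∈ Rset b, ∀ z ∈ Rset c,
      ((unitIdx (sigma2 (.node a b c))).map fun e =>
        factorialProd (List.zipWith (· + ·) (x ++ y ++ z) e)).sum
      = 3 * ellB (.node a b c) * factorialProd x * factorialProd y * factorialProd z := by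
    intro x hx y hy z hz
    obtain ⟨hxl, hxs⟩ := length_sum_of_mem_Rset hx
    obtain ⟨hyl, hys⟩ := length_sum_of_mem_Rset hy
    obtain ⟨hzl, hzs⟩ := length_sum_of_mem_Rset hz
    have hlen : (x ++ y ++ z).length = sigma2 (.node a b c) := by
      simp [hxl, hyl, hzl, sigma2, add_assoc]
    rw [← hlen, sum_factorialProd_add_unitIdx, hlen, sigma2_eq]
    simp only [List.sum_append, hxs, hys, hzs, factorialProd_append, ellB]
    ring
  simp only [Pfun_eq_sum_factorialProd, Rset, Multiset.map_bind, Multiset.sum_bind,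
    Multiset.map_map, Function.comp_def]
  rw [Multiset.map_congr rfl fun x hx => congrArg Multiset.sum <| Multiset.map_congr rfl
    fun y hy => congrArg Multiset.sum <| Multiset.map_congr rfl fun z hz => hinner x hx y hy z hz]
  simp only [Multiset.sum_map_mul_left, Multiset.sum_map_mul_right]
  ring

noncomputable def weight (T : ℝ) (γ : BranchTree) : ℝ := T ^ ellB γ / Dfun γ * Pfun γ

lemma weight_zero (T : ℝ) : weight T .zero = 1 := by
  simp [weight, ellB, Dfun, Pfun_eq_sum_factorialProd, Rset, factorialProd]

lemma weight_one (T : ℝ) : weight T .one = 3 * T := by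
  simp [weight, ellB, Dfun, Pfun_eq_sum_factorialProd, Rset, factorialProd]
  ring

lemma Dfun_pos (γ : BranchTree) : 0 < Dfun γ := by
  induction γ with
  | zero => exact Nat.one_pos
  | one => exact Nat.one_pos
  | node a b c iha ihb ihc => simp only [Dfun, ellB]; positivity

lemma weight_nonneg {T : ℝ} (hT : 0 ≤ T) (γ : BranchTree) : 0 ≤ weight T γ := by
  unfold weight; positivity

lemma weight_node (T : ℝ) (a b c : BranchTree) :
    weight T (.node a b c) = 3 * T * (weight T a * weight T b * weight T c) := by
  have hD (γ : BranchTree) : (Dfun γ : ℝ) ≠ 0 := by exact_mod_cast (Dfun_pos γ).ne'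
  simp only [weight, Pfun_node, Dfun, Nat.cast_mul, Nat.cast_ofNat]
  rw [show ellB (.node a b c) = ellB a + ellB b + ellB c + 1 by simp only [ellB]; ring]
  field_simp [hD a, hD b, hD c]
  ring

lemma sum_Gamma_succ_succ {M : Type*} [AddCommMonoid M] (f : BranchTree → M) (n : ℕ) :
    ∑ γ ∈ Gamma (n + 2), f γ
      = f .zero + ∑ x ∈ Gamma (n + 1), ∑ y ∈ Gamma (n + 1), ∑ z ∈ Gamma (n + 1),
          f (.node x y z) := by
  rw [Gamma, Finset.sum_insert (by simp), Finset.sum_image (by simp), Finset.sum_product,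
    Finset.sum_congr rfl fun x _ => Finset.sum_product _ _ _]

lemma sum_weight_Gamma_succ_succ (T : ℝ) (n : ℕ) :
    ∑ γ ∈ Gamma (n + 2), weight T γ = 1 + 3 * T * (∑ γ ∈ Gamma (n + 1), weight T γ) ^ 3 := by
  rw [sum_Gamma_succ_succ, weight_zero, pow_three, Finset.sum_mul_sum, Finset.sum_mul_sum]
  simp only [Finset.mul_sum, weight_node, mul_assoc]

theorem M_k_le_general (T : ℝ) (hT0 : 0 < T) (hT : T ≤ 4 / 81) (k : ℕ) :
    ∑ γ ∈ Gamma k, T ^ ellB γ / (Dfun γ : ℝ) * (Pfun γ : ℝ) ≤ 3 / 2 := by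
  change ∑ γ ∈ Gamma k, weight T γ ≤ 3 / 2
  induction k using Nat.twoStepInduction with
  | zero => norm_num [Gamma]
  | one =>
    rw [show Gamma 1 = {.zero, .one} from rfl, Finset.sum_pair (by decide), weight_zero,
      weight_one]
    linarith
  | more n _ ih =>
    have hM : 0 ≤ ∑ γ ∈ Gamma (n + 1), weight T γ :=
      Finset.sum_nonneg fun γ _ => weight_nonneg hT0.le γ
    calc ∑ γ ∈ Gamma (n + 2), weight T γ
        = 1 + 3 * T * (∑ γ ∈ Gamma (n + 1), weight T γ) ^ 3 := sum_weight_Gamma_succ_succ T n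
      _ ≤ 1 + 3 * T * (3 / 2) ^ 3 := by gcongr
      _ ≤ 3 / 2 := by linarith

theorem M_k_le (T : ℝ) (hT0 : 0 < T) (hT : T ≤ 4 / 81) (k : ℕ) (hk : 1 ≤ k) :
    ∑ γ ∈ Gamma k, T ^ ellB γ / (Dfun γ : ℝ) * (Pfun γ : ℝ) ≤ 3 / 2 :=
  M_k_le_general T hT0 hT k
end

section
/- Let ν ≥ 1, 0 < κ ≤ 1, C > 0, and 0 < ϱ with 0 < κ/4 − 4ϱ ≤ 1. If |𝔠(t,n)| ≤ C e^{-κ|n|/2} uniformly in t and u^ε, u_linear are as in the weakly nonlinear derivative NLS problem, then for t = |ε|^{-1+η}, the weighted ℓ² norm satisfies ∑_{n∈ℤ^ν} e^{2ϱ|n|} |𝔠^ε(t,n) − e^{-i⟨n⟩²t}𝔠(n)|² ≤ 3(κ/4 − 4ϱ)^{-1}(12/κ)^6 (|ε| t)² · const ≲ |ε|^{2η}, and hence the analytic Sobolev norm ‖u^ε(t) − u_linear(t)‖_{ℋ^ϱ_x} → 0 as ε → 0. -/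
abbrev Triple (ν : ℕ) (n : Fin ν → ℤ) : Type :=
  {p : (Fin ν → ℤ) × (Fin ν → ℤ) × (Fin ν → ℤ) // p.1 - p.2.1 + p.2.2 = n}

noncomputable def frq (ν : ℕ) (ω : Fin ν → ℝ) (n : Fin ν → ℤ) : ℝ :=
  ∑ j, (n j : ℝ) * ω j

noncomputable def l1 (ν : ℕ) (n : Fin ν → ℤ) : ℝ := ∑ j, |(n j : ℝ)|

noncomputable def NLterm (ν : ℕ) (c : (Fin ν → ℤ) → ℂ) (n : Fin ν → ℤ) : ℂ :=
  ∑' p : Triple ν n,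
    c p.val.1 *
      (starRingEnd ℂ) (c p.val.2.1) *
      c p.val.2.2

/-!
By the Duhamel formula, the deviation of the mode `n` from its free evolution is at most
`|ε| t |⟨n⟩|` times a uniform bound on the cubic term. On the convolution constraint
`n₁ - n₂ + n₃ = n` the triangle inequality gives `|n| ≤ |n₁| + |n₂| + |n₃|`, so the decay
`e^{-κ|nⱼ|/2}` of the coefficients yields the decay `e^{-κ|n|/4}` of the cubic term, at the price
of two convergent lattice sums. After squaring, the frequency factor `|⟨n⟩|² ≤ ‖ω‖² |n|²` is
absorbed by half of the margin between the decay `κ/2` and the weight `2ϱ`, and the other half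
makes the weighted series converge. Finally `|ε| t = |ε|^η` for `t = |ε|^{-1+η}`.
-/

open Real

lemma summable_exp_neg_mul_abs_int {a : ℝ} (ha : 0 < a) :
    Summable fun k : ℤ => exp (-a * |(k : ℝ)|) := by
  have hgeo : Summable fun n : ℕ => exp (-a) ^ n :=
    summable_geometric_of_lt_one (exp_pos _).le (exp_lt_one_iff.mpr (by linarith))
  apply Summable.of_nat_of_neg <;> refine hgeo.congr fun n => ?_ <;>
    simp [← exp_nat_mul, mul_comm]

lemma l1_nonneg (ν : ℕ) (n : Fin ν → ℤ) : 0 ≤ l1 ν n :=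
  Finset.sum_nonneg fun _ _ => abs_nonneg _

lemma l1_cons (ν : ℕ) (k : ℤ) (m : Fin ν → ℤ) :
    l1 (ν + 1) (Fin.cons k m) = |(k : ℝ)| + l1 ν m := by
  simp [l1, Fin.sum_univ_succ]

lemma l1_sub_add_le (ν : ℕ) (a b d : Fin ν → ℤ) :
    l1 ν (a - b + d) ≤ l1 ν a + l1 ν b + l1 ν d := by
  simp only [l1, ← Finset.sum_add_distrib]
  gcongr with j
  simp only [Pi.add_apply, Pi.sub_apply, Int.cast_add, Int.cast_sub]
  exact (abs_add_le _ _).trans (by gcongr; exact abs_sub _ _)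

lemma summable_exp_neg_mul_l1 {a : ℝ} (ha : 0 < a) (ν : ℕ) :
    Summable fun m : Fin ν → ℤ => exp (-a * l1 ν m) := by
  induction ν with
  | zero => exact Summable.of_finite
  | succ ν ih =>
    rw [← (Fin.consEquiv fun _ => ℤ).summable_iff]
    refine ((summable_exp_neg_mul_abs_int ha).mul_of_nonneg ih (fun _ => (exp_pos _).le)
      fun _ => (exp_pos _).le).congr fun q => ?_
    simp [Fin.consEquiv, l1_cons, mul_add, exp_add, mul_comm]

lemma abs_frq_le (ν : ℕ) (ω : Fin ν → ℝ) (n : Fin ν → ℤ) : |frq ν ω n| ≤ ‖ω‖ * l1 ν n := by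
  rw [l1, Finset.mul_sum]
  refine (Finset.abs_sum_le_sum_abs _ _).trans (Finset.sum_le_sum fun j _ => ?_)
  rw [abs_mul, mul_comm, ← Real.norm_eq_abs (ω j)]
  exact mul_le_mul_of_nonneg_right (norm_le_pi_norm ω j) (abs_nonneg _)

def tripleEquivProd (ν : ℕ) (n : Fin ν → ℤ) : Triple ν n ≃ (Fin ν → ℤ) × (Fin ν → ℤ) where
  toFun p := (p.val.1, p.val.2.1)
  invFun q := ⟨(q.1, q.2, n - q.1 + q.2), by ring⟩
  left_inv := by
    rintro ⟨⟨a, b, d⟩, rfl⟩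
    ext <;> simp; ring
  right_inv _ := rfl

lemma norm_exp_neg_I_mul_ofReal_sq_mul (x t : ℝ) :
    ‖Complex.exp (-Complex.I * (x : ℂ) ^ 2 * (t : ℂ))‖ = 1 := by
  rw [Complex.norm_exp]
  simp [Complex.mul_re, Complex.mul_im, ← Complex.ofReal_pow]

lemma sq_mul_exp_neg_two_mul_le {b L : ℝ} (hb : 0 < b) (hL : 0 ≤ L) :
    L ^ 2 * exp (-(2 * b) * L) ≤ 2 / b ^ 2 * exp (-b * L) := by
  have h := pow_div_factorial_le_exp (x := b * L) (mul_nonneg hb.le hL) 2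
  have hL2 : L ^ 2 ≤ 2 / b ^ 2 * exp (b * L) := by
    rw [div_mul_eq_mul_div, le_div_iff₀ (by positivity)]
    norm_num [Nat.factorial] at h
    nlinarith
  calc L ^ 2 * exp (-(2 * b) * L) ≤ 2 / b ^ 2 * exp (b * L) * exp (-(2 * b) * L) := by gcongr
    _ = 2 / b ^ 2 * exp (-b * L) := by rw [mul_assoc, ← exp_add]; ring_nf

lemma norm_NLterm_le {ν : ℕ} {a C : ℝ} (ha : 0 < a) (u : (Fin ν → ℤ) → ℂ)
    (hu : ∀ m, ‖u m‖ ≤ C * exp (-a * l1 ν m)) (n : Fin ν → ℤ) :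
    ‖NLterm ν u n‖ ≤
      C ^ 3 * (∑' m, exp (-(a / 2) * l1 ν m)) ^ 2 * exp (-(a / 2) * l1 ν n) := by
  set f : (Fin ν → ℤ) → ℝ := fun m => exp (-(a / 2) * l1 ν m)
  have hC : 0 ≤ C := nonneg_of_mul_nonneg_left ((norm_nonneg _).trans (hu 0)) (exp_pos _)
  have hf : Summable f := summable_exp_neg_mul_l1 (half_pos ha) ν
  have hff : Summable fun q : (Fin ν → ℤ) × (Fin ν → ℤ) => f q.1 * f q.2 :=
    hf.mul_of_nonneg hf (fun _ => (exp_pos _).le) fun _ => (exp_pos _).le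
  set g : Triple ν n → ℝ := fun p => C ^ 3 * f n * (f p.val.1 * f p.val.2.1)
  have hg : Summable g := (tripleEquivProd ν n).symm.summable_iff.mp (hff.mul_left _)
  have hterm : ∀ p : Triple ν n,
      ‖u p.val.1 * starRingEnd ℂ (u p.val.2.1) * u p.val.2.2‖ ≤ g p := by
    rintro ⟨⟨n₁, n₂, n₃⟩, hp⟩
    have hL : l1 ν n ≤ l1 ν n₁ + l1 ν n₂ + l1 ν n₃ := hp ▸ l1_sub_add_le ν n₁ n₂ n₃
    have hexp : -a * (l1 ν n₁ + l1 ν n₂ + l1 ν n₃) ≤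
        -(a / 2) * l1 ν n + (-(a / 2) * l1 ν n₁ + -(a / 2) * l1 ν n₂) := by
      nlinarith [mul_le_mul_of_nonneg_left hL ha.le, mul_nonneg ha.le (l1_nonneg ν n₃)]
    calc ‖u n₁ * starRingEnd ℂ (u n₂) * u n₃‖ = ‖u n₁‖ * ‖u n₂‖ * ‖u n₃‖ := by simp
      _ ≤ (C * exp (-a * l1 ν n₁)) * (C * exp (-a * l1 ν n₂)) * (C * exp (-a * l1 ν n₃)) := by
          gcongr <;> exact hu _
      _ = C ^ 3 * exp (-a * (l1 ν n₁ + l1 ν n₂ + l1 ν n₃)) := by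
          simp only [mul_add, exp_add]; ring
      _ ≤ C ^ 3 * exp (-(a / 2) * l1 ν n + (-(a / 2) * l1 ν n₁ + -(a / 2) * l1 ν n₂)) := by
          gcongr
      _ = g ⟨(n₁, n₂, n₃), hp⟩ := by simp only [g, f, exp_add]; ring
  have hsum : ∑' p, g p = C ^ 3 * (∑' m, f m) ^ 2 * f n := by
    rw [← (tripleEquivProd ν n).symm.tsum_eq]
    simp only [g, tripleEquivProd, Equiv.coe_fn_symm_mk]
    rw [tsum_mul_left, ← hf.tsum_mul_tsum hf hff]
    ring
  exact hsum ▸ tsum_of_norm_bounded hg.hasSum hterm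

lemma norm_sub_free_evolution_le {ν : ℕ} {a C ε t : ℝ} (ha : 0 < a) (ht : 0 ≤ t)
    (ω : Fin ν → ℝ) (c0 : (Fin ν → ℤ) → ℂ) (u : ℝ → (Fin ν → ℤ) → ℂ)
    (hdecay : ∀ s, 0 ≤ s → ∀ m, ‖u s m‖ ≤ C * exp (-a * l1 ν m)) (n : Fin ν → ℤ)
    (hduh : u t n = Complex.exp (-Complex.I * ((frq ν ω n : ℝ) : ℂ) ^ 2 * (t : ℂ)) * c0 n +
      Complex.I * (ε : ℂ) * ((frq ν ω n : ℝ) : ℂ) *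
        ∫ s in (0 : ℝ)..t,
          Complex.exp (-Complex.I * ((frq ν ω n : ℝ) : ℂ) ^ 2 * ((t : ℂ) - (s : ℂ))) *
            NLterm ν (u s) n) :
    ‖u t n - Complex.exp (-Complex.I * ((frq ν ω n : ℝ) : ℂ) ^ 2 * (t : ℂ)) * c0 n‖ ≤
      |ε| * t * (‖ω‖ * C ^ 3 * (∑' m, exp (-(a / 2) * l1 ν m)) ^ 2) *
        (l1 ν n * exp (-(a / 2) * l1 ν n)) := by
  set B := C ^ 3 * (∑' m, exp (-(a / 2) * l1 ν m)) ^ 2 * exp (-(a / 2) * l1 ν n)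
  have hint : ‖∫ s in (0 : ℝ)..t,
      Complex.exp (-Complex.I * ((frq ν ω n : ℝ) : ℂ) ^ 2 * ((t : ℂ) - (s : ℂ))) *
        NLterm ν (u s) n‖ ≤ B * t := by
    have hB : ∀ s ∈ Set.uIoc 0 t,
        ‖Complex.exp (-Complex.I * ((frq ν ω n : ℝ) : ℂ) ^ 2 * ((t : ℂ) - (s : ℂ))) *
          NLterm ν (u s) n‖ ≤ B := by
      intro s hs
      rw [Set.uIoc_of_le ht] at hs
      rw [norm_mul, ← Complex.ofReal_sub, norm_exp_neg_I_mul_ofReal_sq_mul, one_mul]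
      exact norm_NLterm_le ha (u s) (hdecay s hs.1.le) n
    simpa [abs_of_nonneg ht] using intervalIntegral.norm_integral_le_of_norm_le_const hB
  rw [hduh, add_sub_cancel_left, norm_mul, norm_mul, norm_mul, Complex.norm_I, one_mul,
    Complex.norm_real, Complex.norm_real, Real.norm_eq_abs, Real.norm_eq_abs]
  have hfrq : |ε| * |frq ν ω n| ≤ |ε| * (‖ω‖ * l1 ν n) :=
    mul_le_mul_of_nonneg_left (abs_frq_le ν ω n) (abs_nonneg ε)
  refine (mul_le_mul hfrq hint (norm_nonneg _) ?_).trans_eq (by ring)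
  exact mul_nonneg (abs_nonneg ε) (mul_nonneg (norm_nonneg ω) (l1_nonneg ν n))

lemma tsum_exp_mul_sq_le {ν : ℕ} {ϱ a D : ℝ} (hϱa : ϱ < a) (f : (Fin ν → ℤ) → ℝ)
    (hf0 : ∀ n, 0 ≤ f n) (hf : ∀ n, f n ≤ D * (l1 ν n * exp (-a * l1 ν n))) :
    ∑' n, exp (2 * ϱ * l1 ν n) * f n ^ 2 ≤
      D ^ 2 * (2 / (a - ϱ) ^ 2 * ∑' n, exp (-(a - ϱ) * l1 ν n)) := by
  have hb : 0 < a - ϱ := sub_pos.mpr hϱa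
  have hterm : ∀ n, exp (2 * ϱ * l1 ν n) * f n ^ 2 ≤
      D ^ 2 * (2 / (a - ϱ) ^ 2) * exp (-(a - ϱ) * l1 ν n) := by
    intro n
    have hweight : exp (2 * ϱ * l1 ν n) * exp (-a * l1 ν n) ^ 2 =
        exp (-(2 * (a - ϱ)) * l1 ν n) := by
      rw [sq, ← exp_add, ← exp_add]; ring_nf
    calc exp (2 * ϱ * l1 ν n) * f n ^ 2
        ≤ exp (2 * ϱ * l1 ν n) * (D * (l1 ν n * exp (-a * l1 ν n))) ^ 2 := by
          gcongr
          exacts [hf0 n, hf n]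
      _ = D ^ 2 * (l1 ν n ^ 2 * exp (-(2 * (a - ϱ)) * l1 ν n)) := by
          linear_combination D ^ 2 * l1 ν n ^ 2 * hweight
      _ ≤ D ^ 2 * (2 / (a - ϱ) ^ 2 * exp (-(a - ϱ) * l1 ν n)) :=
          mul_le_mul_of_nonneg_left (sq_mul_exp_neg_two_mul_le hb (l1_nonneg ν n)) (sq_nonneg D)
      _ = D ^ 2 * (2 / (a - ϱ) ^ 2) * exp (-(a - ϱ) * l1 ν n) := by ring
  have hS := (summable_exp_neg_mul_l1 hb ν).mul_left (D ^ 2 * (2 / (a - ϱ) ^ 2))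
  calc ∑' n, exp (2 * ϱ * l1 ν n) * f n ^ 2
      ≤ ∑' n, D ^ 2 * (2 / (a - ϱ) ^ 2) * exp (-(a - ϱ) * l1 ν n) :=
        (hS.of_nonneg_of_le (fun n => by have := hf0 n; positivity) hterm).tsum_le_tsum hterm hS
    _ = D ^ 2 * (2 / (a - ϱ) ^ 2 * ∑' n, exp (-(a - ϱ) * l1 ν n)) := by
        rw [tsum_mul_left, mul_assoc]

theorem sobolev_asymptotics_general (ν : ℕ) (κ C ϱ η : ℝ)
    (hκ : 0 < κ)
    (hϱκ : 0 < κ / 4 - 4 * ϱ)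
    (ω : Fin ν → ℝ) (c0 : (Fin ν → ℤ) → ℂ)
    (c : ℝ → ℝ → (Fin ν → ℤ) → ℂ)
    (hdecay : ∀ (ε t : ℝ) (n : Fin ν → ℤ), 0 ≤ t →
      ‖c ε t n‖ ≤ C * Real.exp (-(κ / 2) * l1 ν n))
    (hduh : ∀ (ε t : ℝ) (n : Fin ν → ℤ), 0 ≤ t → c ε t n =
      Complex.exp (-Complex.I * ((frq ν ω n : ℝ) : ℂ) ^ 2 * (t : ℂ)) * c0 n +
        Complex.I * (ε : ℂ) * ((frq ν ω n : ℝ) : ℂ) *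
          ∫ s in (0 : ℝ)..t,
            Complex.exp (-Complex.I * ((frq ν ω n : ℝ) : ℂ) ^ 2 * ((t : ℂ) - (s : ℂ))) *
              NLterm ν (c ε s) n) :
    ∃ K > (0 : ℝ), ∀ (ε : ℝ), ε ≠ 0 → |ε| ≤ 1 →
      (∑' n : Fin ν → ℤ, Real.exp (2 * ϱ * l1 ν n) *
          (‖c ε (|ε| ^ (-1 + η : ℝ)) n -
            Complex.exp (-Complex.I * ((frq ν ω n : ℝ) : ℂ) ^ 2 *
              ((|ε| ^ (-1 + η : ℝ) : ℝ) : ℂ)) * c0 n‖) ^ 2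
        ≤ 3 * (κ / 4 - 4 * ϱ)⁻¹ * (12 / κ) ^ 6 * (|ε| * |ε| ^ (-1 + η : ℝ)) ^ 2 * K) ∧
      (∑' n : Fin ν → ℤ, Real.exp (2 * ϱ * l1 ν n) *
          (‖c ε (|ε| ^ (-1 + η : ℝ)) n -
            Complex.exp (-Complex.I * ((frq ν ω n : ℝ) : ℂ) ^ 2 *
              ((|ε| ^ (-1 + η : ℝ) : ℝ) : ℂ)) * c0 n‖) ^ 2
        ≤ 3 * (κ / 4 - 4 * ϱ)⁻¹ * (12 / κ) ^ 6 * K * |ε| ^ (2 * η)) := by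
  have hϱ : ϱ < κ / 2 / 2 := by linarith
  set A := (‖ω‖ * C ^ 3 * (∑' m, exp (-(κ / 2 / 2) * l1 ν m)) ^ 2) ^ 2 *
    (2 / (κ / 2 / 2 - ϱ) ^ 2 * ∑' n, exp (-(κ / 2 / 2 - ϱ) * l1 ν n))
  have hbound : ∀ ε t, 0 ≤ t → ∑' n, exp (2 * ϱ * l1 ν n) *
      ‖c ε t n - Complex.exp (-Complex.I * ((frq ν ω n : ℝ) : ℂ) ^ 2 * (t : ℂ)) * c0 n‖ ^ 2 ≤
        (|ε| * t) ^ 2 * A := fun ε t ht =>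
    (tsum_exp_mul_sq_le hϱ _ (fun _ => norm_nonneg _) fun n =>
      norm_sub_free_evolution_le (half_pos hκ) ht ω c0 (c ε)
        (fun s hs m => hdecay ε s m hs) n (hduh ε t n ht)).trans_eq (by ring)
  set D := 3 * (κ / 4 - 4 * ϱ)⁻¹ * (12 / κ) ^ 6
  have hD : 0 < D := by have := inv_pos.mpr hϱκ; positivity
  refine ⟨(A + 1) / D, by positivity, fun ε hε _ => ?_⟩
  have hε' : 0 < |ε| := abs_pos.mpr hε
  have hpow : (|ε| * |ε| ^ (-1 + η)) ^ 2 = |ε| ^ (2 * η) := by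
    rw [mul_comm, ← rpow_add_one hε'.ne', ← rpow_natCast, ← rpow_mul hε'.le]
    ring_nf
  have hle := (hbound ε (|ε| ^ (-1 + η)) (rpow_nonneg hε'.le _)).trans
    (mul_le_mul_of_nonneg_left (le_add_of_nonneg_right zero_le_one) (sq_nonneg _))
  have hDK : D * ((A + 1) / D) = A + 1 := mul_div_cancel₀ _ hD.ne'
  refine ⟨hle.trans_eq ?_, hle.trans_eq ?_⟩
  · rw [mul_comm D, mul_assoc, hDK]
  · rw [hDK, hpow, mul_comm]

theorem sobolev_asymptotics (ν : ℕ) (hν : 1 ≤ ν) (κ C ϱ η : ℝ)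
    (hκ : 0 < κ) (hκ1 : κ ≤ 1) (hC : 0 < C) (hϱ : 0 < ϱ)
    (hϱκ : 0 < κ / 4 - 4 * ϱ) (hϱκ1 : κ / 4 - 4 * ϱ ≤ 1)
    (hη : 0 < η) (hη1 : η < 1)
    (ω : Fin ν → ℝ) (c0 : (Fin ν → ℤ) → ℂ)
    (c : ℝ → ℝ → (Fin ν → ℤ) → ℂ)
    (hinit : ∀ (ε : ℝ) (n : Fin ν → ℤ), c ε 0 n = c0 n)
    (hdecay : ∀ (ε t : ℝ) (n : Fin ν → ℤ), 0 ≤ t →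
      ‖c ε t n‖ ≤ C * Real.exp (-(κ / 2) * l1 ν n))
    (hduh : ∀ (ε t : ℝ) (n : Fin ν → ℤ), 0 ≤ t → c ε t n =
      Complex.exp (-Complex.I * ((frq ν ω n : ℝ) : ℂ) ^ 2 * (t : ℂ)) * c0 n +
        Complex.I * (ε : ℂ) * ((frq ν ω n : ℝ) : ℂ) *
          ∫ s in (0 : ℝ)..t,
            Complex.exp (-Complex.I * ((frq ν ω n : ℝ) : ℂ) ^ 2 * ((t : ℂ) - (s : ℂ))) *
              NLterm ν (c ε s) n) :
    ∃ K > (0 : ℝ), ∀ (ε : ℝ), ε ≠ 0 → |ε| ≤ 1 →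
      (∑' n : Fin ν → ℤ, Real.exp (2 * ϱ * l1 ν n) *
          (‖c ε (|ε| ^ (-1 + η : ℝ)) n -
            Complex.exp (-Complex.I * ((frq ν ω n : ℝ) : ℂ) ^ 2 *
              ((|ε| ^ (-1 + η : ℝ) : ℝ) : ℂ)) * c0 n‖) ^ 2
        ≤ 3 * (κ / 4 - 4 * ϱ)⁻¹ * (12 / κ) ^ 6 * (|ε| * |ε| ^ (-1 + η : ℝ)) ^ 2 * K) ∧
      (∑' n : Fin ν → ℤ, Real.exp (2 * ϱ * l1 ν n) *
          (‖c ε (|ε| ^ (-1 + η : ℝ)) n -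
            Complex.exp (-Complex.I * ((frq ν ω n : ℝ) : ℂ) ^ 2 *
              ((|ε| ^ (-1 + η : ℝ) : ℝ) : ℂ)) * c0 n‖) ^ 2
        ≤ 3 * (κ / 4 - 4 * ϱ)⁻¹ * (12 / κ) ^ 6 * K * |ε| ^ (2 * η)) :=
  sobolev_asymptotics_general ν κ C ϱ η hκ hϱκ ω c0 c hdecay hduh
end
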